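/- Fix a real L < 0 and reals y_0, y_1 with y_0 < y_1 < log(1 − 1/L), and fix any y < y_1. Let Y_1, …, Y_n be reals with y_0 ≤ Y_i ≤ y_1 for all i. Then n·(a_1·m_2 + b_1·m_1 + c_1) ≤ Σ_{i=1}^n log(1 + L·(e^{Y_i} − 1)), where a_1, b_1, c_1 are the quadratic coefficients determined by L, y and y_1. (This is the lower bound of Theorem 4.) -/

import Mathlib

/-!
Write `f t = log (1 + L (eᵗ - 1))` and `q t = a t² + b t + c`: the coefficients make `q` tangent
to `f` at `y` and equal to `f` at `y₁`. For `L < 0` one has `f''' < 0` wherever `f` is defined,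
so `h' = f' - q'` is concave. By Rolle, `h'` has a second zero `z ∈ (y, y₁)`, and concavity
forces `h' ≤ 0` on `(-∞, y]`, `h' ≥ 0` on `[y, z]` and `h' ≤ 0` on `[z, y₁]`. Thus `h = f - q`
decreases to `h y = 0`, increases, then decreases to `h y₁ = 0`, so `q ≤ f` on `(-∞, y₁]`;
summing this over the sample gives the bound.
-/

open Real Set

theorem nonneg_of_hasDerivAt_of_concaveOn {h h' : ℝ → ℝ} {y y₁ : ℝ} (hyy₁ : y < y₁)
    (hh : ∀ t ≤ y₁, HasDerivAt h (h' t) t) (hh' : ConcaveOn ℝ (Iic y₁) h')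
    (hy : h y = 0) (hy₁ : h y₁ = 0) (h'y : h' y = 0) {t : ℝ} (ht : t ≤ y₁) : 0 ≤ h t := by
  obtain ⟨z, ⟨hyz, hzy₁⟩, h'z⟩ := exists_hasDerivAt_eq_zero hyy₁
    (fun s hs => (hh s hs.2).continuousAt.continuousWithinAt) (hy.trans hy₁.symm)
    (fun s hs => hh s hs.2.le)
  have hcont : ∀ {I : Set ℝ}, I ⊆ Iic y₁ → ContinuousOn h I :=
    fun hI s hs => (hh s (hI hs)).continuousAt.continuousWithinAt
  have hderiv : ∀ {I : Set ℝ}, I ⊆ Iic y₁ →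
      ∀ s ∈ interior I, HasDerivWithinAt h (h' s) (interior I) s :=
    fun hI s hs => (hh s (hI (interior_subset hs))).hasDerivWithinAt
  have hyI : y ∈ Iic y₁ := hyy₁.le
  have hzI : z ∈ Iic y₁ := hzy₁.le
  rcases le_or_gt t y with hty | hyt
  · have hanti : AntitoneOn h (Iic y) := by
      have hI : Iic y ⊆ Iic y₁ := Iic_subset_Iic.2 hyy₁.le
      refine antitoneOn_of_hasDerivWithinAt_nonpos (convex_Iic y) (hcont hI) (hderiv hI)
        fun s hs => ?_
      rw [interior_Iic] at hs
      exact (hh'.left_le_of_le_right'' (hs.le.trans hyy₁.le) hzI hs.le hyz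
        (h'y.trans h'z.symm).le).trans_eq h'y
    simpa only [hy] using hanti (mem_Iic.2 hty) (mem_Iic.2 le_rfl) hty
  rcases le_or_gt t z with htz | hzt
  · have hmono : MonotoneOn h (Icc y z) := by
      have hI : Icc y z ⊆ Iic y₁ := fun s hs => hs.2.trans hzy₁.le
      refine monotoneOn_of_hasDerivWithinAt_nonneg (convex_Icc y z) (hcont hI) (hderiv hI)
        fun s hs => ?_
      rw [interior_Icc] at hs
      simpa only [h'y, h'z, min_self] using
        hh'.ge_on_segment hyI hzI ((segment_eq_Icc hyz.le).symm ▸ Ioo_subset_Icc_self hs)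
    simpa only [hy] using hmono ⟨le_rfl, hyz.le⟩ ⟨hyt.le, htz⟩ hyt.le
  · have hanti : AntitoneOn h (Icc z y₁) := by
      have hI : Icc z y₁ ⊆ Iic y₁ := fun s hs => hs.2
      refine antitoneOn_of_hasDerivWithinAt_nonpos (convex_Icc z y₁) (hcont hI) (hderiv hI)
        fun s hs => ?_
      rw [interior_Icc] at hs
      exact (hh'.right_le_of_le_left'' hyI hs.2.le hyz hs.1.le
        (h'z.trans h'y.symm).le).trans_eq h'z
    simpa only [hy₁] using hanti ⟨hzt.le, ht⟩ ⟨hzy₁.le, le_rfl⟩ ht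

noncomputable def leveragedLogReturn (L t : ℝ) : ℝ := log (1 + L * (exp t - 1))

theorem one_add_mul_exp_sub_one_pos {L t : ℝ} (hL : L < 0) (ht : t < log (1 - 1 / L)) :
    0 < 1 + L * (exp t - 1) := by
  have hexp : exp t < 1 - 1 / L :=
    (lt_log_iff_exp_lt (by have := one_div_neg.2 hL; linarith)).1 ht
  have := mul_lt_mul_of_neg_left hexp hL
  rw [mul_sub, mul_one, mul_one_div_cancel hL.ne] at this
  linarith

theorem hasDerivAt_one_add_mul_exp_sub_one (L t : ℝ) :
    HasDerivAt (fun s => 1 + L * (exp s - 1)) (L * exp t) t :=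
  (((hasDerivAt_exp t).sub_const 1).const_mul L).const_add 1

theorem hasDerivAt_leveragedLogReturn {L t : ℝ} (hD : 1 + L * (exp t - 1) ≠ 0) :
    HasDerivAt (leveragedLogReturn L) (L * exp t / (1 + L * (exp t - 1))) t :=
  (hasDerivAt_one_add_mul_exp_sub_one L t).log hD

theorem hasDerivAt_mul_exp_div_one_add_mul_exp_sub_one {L t : ℝ}
    (hD : 1 + L * (exp t - 1) ≠ 0) :
    HasDerivAt (fun s => L * exp s / (1 + L * (exp s - 1)))
      (L * (1 - L) * exp t / (1 + L * (exp t - 1)) ^ 2) t := by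
  refine (((hasDerivAt_exp t).const_mul L).div (hasDerivAt_one_add_mul_exp_sub_one L t)
    hD).congr_deriv ?_
  field_simp
  ring

theorem hasDerivAt_mul_exp_div_sq_one_add_mul_exp_sub_one {L t : ℝ}
    (hD : 1 + L * (exp t - 1) ≠ 0) :
    HasDerivAt (fun s => L * (1 - L) * exp s / (1 + L * (exp s - 1)) ^ 2)
      (L * (1 - L) * exp t * ((1 - L) - L * exp t) / (1 + L * (exp t - 1)) ^ 3) t := by
  refine (((hasDerivAt_exp t).const_mul (L * (1 - L))).div
    ((hasDerivAt_one_add_mul_exp_sub_one L t).fun_pow 2) (pow_ne_zero 2 hD)).congr_deriv ?_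
  field_simp
  ring

theorem hasDerivAt_quadratic (a b c t : ℝ) :
    HasDerivAt (fun s => a * s ^ 2 + b * s + c) (2 * a * t + b) t := by
  refine (((hasDerivAt_pow 2 t).const_mul a).add ((hasDerivAt_id t).const_mul b)).add_const c
    |>.congr_deriv ?_
  push_cast
  ring

theorem quadratic_le_leveragedLogReturn {L y y₁ a b c : ℝ} (hL : L < 0) (hyy₁ : y < y₁)
    (hy₁ : y₁ < log (1 - 1 / L)) (hqy : a * y ^ 2 + b * y + c = leveragedLogReturn L y)
    (hqy₁ : a * y₁ ^ 2 + b * y₁ + c = leveragedLogReturn L y₁)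
    (hq'y : 2 * a * y + b = L * exp y / (1 + L * (exp y - 1))) {t : ℝ} (ht : t ≤ y₁) :
    a * t ^ 2 + b * t + c ≤ leveragedLogReturn L t := by
  have hD : ∀ s ≤ y₁, 0 < 1 + L * (exp s - 1) :=
    fun s hs => one_add_mul_exp_sub_one_pos hL (hs.trans_lt hy₁)
  have hh' : ∀ s ≤ y₁,
      HasDerivAt (fun s => L * exp s / (1 + L * (exp s - 1)) - (2 * a * s + b))
        (L * (1 - L) * exp s / (1 + L * (exp s - 1)) ^ 2 - 2 * a) s := fun s hs =>
    (hasDerivAt_mul_exp_div_one_add_mul_exp_sub_one (hD s hs).ne').sub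
      (by simpa using ((hasDerivAt_id s).const_mul (2 * a)).add_const b)
  have hh'' : ∀ s ≤ y₁,
      HasDerivAt (fun s => L * (1 - L) * exp s / (1 + L * (exp s - 1)) ^ 2 - 2 * a)
        (L * (1 - L) * exp s * ((1 - L) - L * exp s) / (1 + L * (exp s - 1)) ^ 3) s :=
    fun s hs => (hasDerivAt_mul_exp_div_sq_one_add_mul_exp_sub_one (hD s hs).ne').sub_const _
  have hh''' : ∀ s ≤ y₁,
      L * (1 - L) * exp s * ((1 - L) - L * exp s) / (1 + L * (exp s - 1)) ^ 3 ≤ 0 := by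
    intro s hs
    have hLexp := mul_neg_of_neg_of_pos hL (exp_pos s)
    refine div_nonpos_of_nonpos_of_nonneg (mul_nonpos_of_nonpos_of_nonneg ?_ (by linarith))
      (pow_pos (hD s hs) 3).le
    exact mul_nonpos_of_nonpos_of_nonneg (mul_nonpos_of_nonpos_of_nonneg hL.le (by linarith))
      (exp_pos s).le
  have hle : ∀ s ∈ interior (Iic y₁), s ≤ y₁ := fun _ hs => interior_subset (s := Iic y₁) hs
  have hconc := concaveOn_of_hasDerivWithinAt2_nonpos (convex_Iic y₁)
    (fun s hs => (hh' s hs).continuousAt.continuousWithinAt)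
    (fun s hs => (hh' s (hle s hs)).hasDerivWithinAt)
    (fun s hs => (hh'' s (hle s hs)).hasDerivWithinAt) (fun s hs => hh''' s (hle s hs))
  exact sub_nonneg.1 <| nonneg_of_hasDerivAt_of_concaveOn hyy₁
    (fun s hs => (hasDerivAt_leveragedLogReturn (hD s hs).ne').sub (hasDerivAt_quadratic a b c s))
    hconc (sub_eq_zero.2 hqy.symm) (sub_eq_zero.2 hqy₁.symm) (sub_eq_zero.2 hq'y.symm) ht

theorem quadratic_eq_of_coeffs {y y₁ v v₁ s a b c : ℝ} (hne : y ≠ y₁)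
    (ha : a = 1 / (y - y₁) * ((v₁ - v) / (y - y₁) + s)) (hb : b = s - 2 * a * y)
    (hc : c = v₁ - a * y₁ ^ 2 - b * y₁) : a * y ^ 2 + b * y + c = v := by
  have hne' : y - y₁ ≠ 0 := sub_ne_zero.2 hne
  subst hc hb ha
  field_simp
  ring

theorem stmt_6_general (L y0 y1 y : ℝ) (hL : L < 0)
    (h1 : y1 < Real.log (1 - 1 / L)) (hy : y < y1)
    (n : ℕ) (Y : Fin n → ℝ) (hY : ∀ i, y0 ≤ Y i ∧ Y i ≤ y1)
    (a b c m1 m2 : ℝ)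
    (ha : a = (1 / (y - y1)) *
      (Real.log ((1 + L * (Real.exp y1 - 1)) / (1 + L * (Real.exp y - 1))) / (y - y1)
        + L * Real.exp y / (1 + L * (Real.exp y - 1))))
    (hb : b = L * Real.exp y / (1 + L * (Real.exp y - 1)) - 2 * a * y)
    (hc : c = Real.log (1 + L * (Real.exp y1 - 1)) - a * y1 ^ 2 - b * y1)
    (hm1 : m1 = (1 / (n : ℝ)) * ∑ i, Y i)
    (hm2 : m2 = (1 / (n : ℝ)) * ∑ i, (Y i) ^ 2) :
    (n : ℝ) * (a * m2 + b * m1 + c) ≤ ∑ i, Real.log (1 + L * (Real.exp (Y i) - 1)) := by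
  rw [Real.log_div (one_add_mul_exp_sub_one_pos hL h1).ne'
    (one_add_mul_exp_sub_one_pos hL (hy.trans h1)).ne'] at ha
  have hq : ∀ t ≤ y1, a * t ^ 2 + b * t + c ≤ leveragedLogReturn L t :=
    fun t ht => quadratic_le_leveragedLogReturn hL hy h1 (quadratic_eq_of_coeffs hy.ne ha hb hc)
      (by rw [hc, leveragedLogReturn]; ring) (by rw [hb]; ring) ht
  calc (n : ℝ) * (a * m2 + b * m1 + c) = ∑ i, (a * Y i ^ 2 + b * Y i + c) := by
        rcases eq_or_ne n 0 with rfl | hn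
        · simp
        · rw [hm1, hm2, Finset.sum_add_distrib, Finset.sum_add_distrib, ← Finset.mul_sum,
            ← Finset.mul_sum, Finset.sum_const, Finset.card_univ, Fintype.card_fin, nsmul_eq_mul]
          field_simp
    _ ≤ _ := Finset.sum_le_sum fun i _ => hq (Y i) (hY i).2

theorem stmt_6 (L y0 y1 y : ℝ) (hL : L < 0)
    (h01 : y0 < y1) (h1 : y1 < Real.log (1 - 1 / L)) (hy : y < y1)
    (n : ℕ) (Y : Fin n → ℝ) (hY : ∀ i, y0 ≤ Y i ∧ Y i ≤ y1)
    (a b c m1 m2 : ℝ)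
    (ha : a = (1 / (y - y1)) *
      (Real.log ((1 + L * (Real.exp y1 - 1)) / (1 + L * (Real.exp y - 1))) / (y - y1)
        + L * Real.exp y / (1 + L * (Real.exp y - 1))))
    (hb : b = L * Real.exp y / (1 + L * (Real.exp y - 1)) - 2 * a * y)
    (hc : c = Real.log (1 + L * (Real.exp y1 - 1)) - a * y1 ^ 2 - b * y1)
    (hm1 : m1 = (1 / (n : ℝ)) * ∑ i, Y i)
    (hm2 : m2 = (1 / (n : ℝ)) * ∑ i, (Y i) ^ 2) :
    (n : ℝ) * (a * m2 + b * m1 + c) ≤ ∑ i, Real.log (1 + L * (Real.exp (Y i) - 1)) :=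
  stmt_6_general L y0 y1 y hL h1 hy n Y hY a b c m1 m2 ha hb hc hm1 hm2
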